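/- arXiv:1507.01232 — 2 statements merged into one kernel-verified Lean document; each statement's English description precedes it below -/
import Mathlib

section
/- Let a > 0 and let E : ℝ → ℝ be a continuously differentiable dispersion relation that is periodic with period 2π/a, i.e. E(p + 2π/a) = E(p) for all p ∈ ℝ. Suppose E has only finitely many zeros in the fundamental domain [0, 2π/a), and every zero p satisfies E′(p) ≠ 0. Then the number of zeros p ∈ [0, 2π/a) with E′(p) > 0 equals the number of zeros with E′(p) < 0. -/
open Real Set Function

/-!
Between two consecutive zeros `p < q` a continuous function keeps a constant sign, so a
nondegenerate zero is an upward crossing exactly when the next zero is a downward one.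
List the zeros in the fundamental domain `[0, T)`, `T = 2π/a`, increasingly as
`z 0 < ⋯ < z (n - 1)`. By periodicity the zero following `z (n - 1)` is `z 0 + T`, so the
cyclic shift `i ↦ i + 1 (mod n)` maps the upward crossings bijectively onto the downward ones.
-/

lemma Function.Periodic.deriv {𝕜 F : Type*} [NontriviallyNormedField 𝕜] [NormedAddCommGroup F]
    [NormedSpace 𝕜 F] {f : 𝕜 → F} {c : 𝕜} (h : Periodic f c) : Periodic (deriv f) c :=
  fun x => by rw [← deriv_comp_add_const, h.funext]

lemma IsPreconnected.forall_pos_or_forall_neg {X : Type*} [TopologicalSpace X] {s : Set X}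
    (hs : IsPreconnected s) {f : X → ℝ} (hf : ContinuousOn f s) (h0 : ∀ x ∈ s, f x ≠ 0) :
    (∀ x ∈ s, 0 < f x) ∨ ∀ x ∈ s, f x < 0 := by
  by_contra! h
  obtain ⟨⟨a, ha, hfa⟩, ⟨b, hb, hfb⟩⟩ := h
  obtain ⟨c, hc, hfc⟩ := hs.intermediate_value ha hb hf ⟨hfa, hfb⟩
  exact h0 c hc hfc

section EndpointExtremum

variable {f : ℝ → ℝ} {p q : ℝ}

lemma IsMinOn.deriv_nonneg_of_Ioo (hpq : p < q) (h : IsMinOn f (Ioo p q) p) :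
    0 ≤ deriv f p := by
  by_cases hd : DifferentiableAt ℝ f p
  · refine ge_of_tendsto ((hasDerivAt_iff_tendsto_slope.1 hd.hasDerivAt).mono_left
      (nhdsGT_le_nhdsNE p)) ?_
    filter_upwards [Ioo_mem_nhdsGT hpq] with x hx
    rw [slope_def_field]
    exact div_nonneg (sub_nonneg.2 (h hx)) (sub_nonneg.2 hx.1.le)
  · rw [deriv_zero_of_not_differentiableAt hd]

lemma IsMinOn.deriv_nonpos_of_Ioo (hpq : p < q) (h : IsMinOn f (Ioo p q) q) :
    deriv f q ≤ 0 := by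
  by_cases hd : DifferentiableAt ℝ f q
  · refine le_of_tendsto ((hasDerivAt_iff_tendsto_slope.1 hd.hasDerivAt).mono_left
      (nhdsLT_le_nhdsNE q)) ?_
    filter_upwards [Ioo_mem_nhdsLT hpq] with x hx
    rw [slope_def_field]
    exact div_nonpos_of_nonneg_of_nonpos (sub_nonneg.2 (h hx)) (sub_nonpos.2 hx.2.le)
  · rw [deriv_zero_of_not_differentiableAt hd]

lemma IsMaxOn.deriv_nonpos_of_Ioo (hpq : p < q) (h : IsMaxOn f (Ioo p q) p) :
    deriv f p ≤ 0 := by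
  simpa using h.neg.deriv_nonneg_of_Ioo hpq

lemma IsMaxOn.deriv_nonneg_of_Ioo (hpq : p < q) (h : IsMaxOn f (Ioo p q) q) :
    0 ≤ deriv f q := by
  simpa using h.neg.deriv_nonpos_of_Ioo hpq

lemma deriv_pos_iff_deriv_neg_of_consecutive_zeros (hpq : p < q)
    (hf : ContinuousOn f (Ioo p q)) (hp : f p = 0) (hq : f q = 0)
    (hno : ∀ x ∈ Ioo p q, f x ≠ 0) (hdp : deriv f p ≠ 0) (hdq : deriv f q ≠ 0) :
    0 < deriv f p ↔ deriv f q < 0 := by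
  rcases isPreconnected_Ioo.forall_pos_or_forall_neg hf hno with hpos | hneg
  · have hmin_p : IsMinOn f (Ioo p q) p := isMinOn_iff.2 fun x hx => hp ▸ (hpos x hx).le
    have hmin_q : IsMinOn f (Ioo p q) q := isMinOn_iff.2 fun x hx => hq ▸ (hpos x hx).le
    exact iff_of_true ((hmin_p.deriv_nonneg_of_Ioo hpq).lt_of_ne' hdp)
      ((hmin_q.deriv_nonpos_of_Ioo hpq).lt_of_ne hdq)
  · have hmax_p : IsMaxOn f (Ioo p q) p := isMaxOn_iff.2 fun x hx => hp ▸ (hneg x hx).le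
    have hmax_q : IsMaxOn f (Ioo p q) q := isMaxOn_iff.2 fun x hx => hq ▸ (hneg x hx).le
    exact iff_of_false (hmax_p.deriv_nonpos_of_Ioo hpq).not_gt
      (hmax_q.deriv_nonneg_of_Ioo hpq).not_gt

end EndpointExtremum

lemma val_finRotate_eq_or {n : ℕ} (i : Fin n) :
    (finRotate n i : ℕ) = i + 1 ∨ (i : ℕ) + 1 = n ∧ (finRotate n i : ℕ) = 0 := by
  cases n with
  | zero => exact i.elim0
  | succ n =>
    rw [coe_finRotate]
    split_ifs with h
    · exact Or.inr ⟨by simp [h], rfl⟩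
    · exact Or.inl rfl

lemma Finset.ncard_sep_eq_ncard_orderEmbOfFin {α : Type*} [LinearOrder α] (s : Finset α)
    (P : α → Prop) : {x ∈ (s : Set α) | P x}.ncard = {i | P (s.orderEmbOfFin rfl i)}.ncard := by
  rw [← ncard_image_of_injective _ (s.orderEmbOfFin rfl).injective, ← preimage_ofPred_eq,
    image_preimage_eq_range_inter, Finset.range_orderEmbOfFin]
  rfl

section PeriodicZeros

variable {E : ℝ → ℝ} {T : ℝ} {Z : Finset ℝ}

local notation "z" => Z.orderEmbOfFin rfl

lemma orderEmbOfFin_mem_zeros (hZ : (Z : Set ℝ) = {p ∈ Ico 0 T | E p = 0}) (i : Fin Z.card) :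
    z i ∈ Ico 0 T ∧ E (z i) = 0 := by
  have hi : z i ∈ (Z : Set ℝ) := Z.orderEmbOfFin_mem rfl i
  rwa [hZ] at hi

lemma exists_orderEmbOfFin_eq_of_zero (hZ : (Z : Set ℝ) = {p ∈ Ico 0 T | E p = 0}) {x : ℝ}
    (hx : x ∈ Ico 0 T) (hx0 : E x = 0) : ∃ k, z k = x := by
  rw [← Set.mem_range, Finset.range_orderEmbOfFin, hZ]
  exact ⟨hx, hx0⟩

lemma ne_zero_of_mem_Ioo_orderEmbOfFin_succ (hZ : (Z : Set ℝ) = {p ∈ Ico 0 T | E p = 0})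
    {i j : Fin Z.card} (hij : (j : ℕ) = i + 1) {x : ℝ} (hx : x ∈ Ioo (z i) (z j)) :
    E x ≠ 0 := by
  intro hx0
  have hxT : x ∈ Ico 0 T := ⟨(orderEmbOfFin_mem_zeros hZ i).1.1.trans hx.1.le,
    hx.2.trans (orderEmbOfFin_mem_zeros hZ j).1.2⟩
  obtain ⟨k, rfl⟩ := exists_orderEmbOfFin_eq_of_zero hZ hxT hx0
  have hik : i < k := (z).lt_iff_lt.1 hx.1
  have hkj : k < j := (z).lt_iff_lt.1 hx.2
  omega

lemma ne_zero_of_mem_Ioo_orderEmbOfFin_last (hper : Periodic E T)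
    (hZ : (Z : Set ℝ) = {p ∈ Ico 0 T | E p = 0}) {i j : Fin Z.card} (hi : (i : ℕ) + 1 = Z.card)
    (hj : (j : ℕ) = 0) {x : ℝ} (hx : x ∈ Ioo (z i) (z j + T)) : E x ≠ 0 := by
  intro hx0
  rcases lt_or_ge x T with hxT | hxT
  · obtain ⟨k, rfl⟩ := exists_orderEmbOfFin_eq_of_zero hZ
      ⟨(orderEmbOfFin_mem_zeros hZ i).1.1.trans hx.1.le, hxT⟩ hx0
    have hik : i < k := (z).lt_iff_lt.1 hx.1
    omega
  · obtain ⟨k, hk⟩ := exists_orderEmbOfFin_eq_of_zero hZ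
      ⟨sub_nonneg.2 hxT, by linarith [hx.2, (orderEmbOfFin_mem_zeros hZ j).1.2]⟩
      ((hper.sub_eq x).trans hx0)
    have hkj : k < j := (z).lt_iff_lt.1 (by linarith [hx.2])
    omega

lemma deriv_pos_iff_deriv_finRotate_neg (hE : Continuous E) (hper : Periodic E T)
    (hZ : (Z : Set ℝ) = {p ∈ Ico 0 T | E p = 0})
    (hnd : ∀ p ∈ Ico 0 T, E p = 0 → deriv E p ≠ 0) (i : Fin Z.card) :
    0 < deriv E (z i) ↔ deriv E (z (finRotate _ i)) < 0 := by
  set j := finRotate _ i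
  obtain ⟨hiT, hi0⟩ := orderEmbOfFin_mem_zeros hZ i
  obtain ⟨hjT, hj0⟩ := orderEmbOfFin_mem_zeros hZ j
  rcases val_finRotate_eq_or i with hij | ⟨hi, hj⟩
  · exact deriv_pos_iff_deriv_neg_of_consecutive_zeros ((z).lt_iff_lt.2 (by omega))
      hE.continuousOn hi0 hj0 (fun x hx => ne_zero_of_mem_Ioo_orderEmbOfFin_succ hZ hij hx)
      (hnd _ hiT hi0) (hnd _ hjT hj0)
  · rw [← hper.deriv (z j)]
    exact deriv_pos_iff_deriv_neg_of_consecutive_zeros (by linarith [hiT.2, hjT.1])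
      hE.continuousOn hi0 ((hper _).trans hj0)
      (fun x hx => ne_zero_of_mem_Ioo_orderEmbOfFin_last hper hZ hi hj hx)
      (hnd _ hiT hi0) (by rw [hper.deriv]; exact hnd _ hjT hj0)

lemma ncard_zeros_and_eq (hZ : (Z : Set ℝ) = {p ∈ Ico 0 T | E p = 0}) (P : ℝ → Prop) :
    {p ∈ Ico 0 T | E p = 0 ∧ P p}.ncard = {i | P (z i)}.ncard := by
  rw [← Z.ncard_sep_eq_ncard_orderEmbOfFin, hZ]
  simp only [Set.mem_ofPred_eq, and_assoc]

end PeriodicZeros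

theorem upward_crossings_eq_downward_crossings_general
    (a : ℝ)
    (E : ℝ → ℝ) (hE : ContDiff ℝ 1 E)
    (hper : ∀ p : ℝ, E (p + 2 * π / a) = E p)
    (hfin : {p ∈ Set.Ico (0 : ℝ) (2 * π / a) | E p = 0}.Finite)
    (hnd : ∀ p ∈ Set.Ico (0 : ℝ) (2 * π / a), E p = 0 → deriv E p ≠ 0) :
    {p ∈ Set.Ico (0 : ℝ) (2 * π / a) | E p = 0 ∧ 0 < deriv E p}.ncard
      = {p ∈ Set.Ico (0 : ℝ) (2 * π / a) | E p = 0 ∧ deriv E p < 0}.ncard := by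
  have hZ := hfin.coe_toFinset
  set z := hfin.toFinset.orderEmbOfFin rfl
  calc {p ∈ Ico 0 (2 * π / a) | E p = 0 ∧ 0 < deriv E p}.ncard
      = {i | 0 < deriv E (z i)}.ncard :=
        ncard_zeros_and_eq hZ (0 < deriv E ·)
    _ = (finRotate _ ⁻¹' {i | deriv E (z i) < 0}).ncard :=
      congrArg ncard <| Set.ext (deriv_pos_iff_deriv_finRotate_neg hE.continuous hper hZ hnd)
    _ = {i | deriv E (z i) < 0}.ncard :=
      ncard_preimage_of_injective_subset_range (Equiv.injective _) (by simp)
    _ = {p ∈ Ico 0 (2 * π / a) | E p = 0 ∧ deriv E p < 0}.ncard :=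
      (ncard_zeros_and_eq hZ (deriv E · < 0)).symm

/-- **One-dimensional Nielsen–Ninomiya counting.**
A `C¹` dispersion relation `E` on a lattice with spacing `a` is periodic with period
`2π/a`.  If `E` has finitely many zeros in the fundamental domain `[0, 2π/a)`, all of
them with nonvanishing derivative, then the zeros with positive slope (right-handed
fermions) are exactly as numerous as the zeros with negative slope (left-handed
fermions). -/
theorem upward_crossings_eq_downward_crossings
    (a : ℝ) (ha : 0 < a)
    (E : ℝ → ℝ) (hE : ContDiff ℝ 1 E)
    (hper : ∀ p : ℝ, E (p + 2 * π / a) = E p)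
    (hfin : {p ∈ Set.Ico (0 : ℝ) (2 * π / a) | E p = 0}.Finite)
    (hnd : ∀ p ∈ Set.Ico (0 : ℝ) (2 * π / a), E p = 0 → deriv E p ≠ 0) :
    {p ∈ Set.Ico (0 : ℝ) (2 * π / a) | E p = 0 ∧ 0 < deriv E p}.ncard
      = {p ∈ Set.Ico (0 : ℝ) (2 * π / a) | E p = 0 ∧ deriv E p < 0}.ncard :=
  upward_crossings_eq_downward_crossings_general a E hE hper hfin hnd
end

section
/- Let n ≥ 1 and let A and B be Hermitian n×n complex matrices. For a Hermitian matrix M, let λ₁(M) ≤ λ₂(M) ≤ … ≤ λ_n(M) denote its eigenvalues listed in increasing order, counted with multiplicity. Then for every i ∈ {1, …, n}, |λᵢ(A) − λᵢ(B)| ≤ ‖A − B‖, where ‖·‖ denotes the operator norm induced by the Euclidean norm on ℂⁿ. In particular, each sorted eigenvalue λᵢ is a continuous function of the Hermitian matrix. -/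
/-!
The eigenvectors of `A` with eigenvalue `≥ μ i` span a subspace of dimension `≥ n - i`, and
those of `B` with eigenvalue `≤ ν i` one of dimension `≥ i + 1`. These dimensions add up to more
than `n`, so the two subspaces share a nonzero vector `x`, and then
`μ i ‖x‖² ≤ re ⟪x, A x⟫ = re ⟪x, B x⟫ + re ⟪x, (A - B) x⟫ ≤ (ν i + ‖A - B‖) ‖x‖²`.
Exchanging `A` and `B` gives the other half of the inequality.
-/

open Module Submodule

theorem Submodule.exists_mem_inf_ne_zero_of_finrank_lt_add {K V : Type*} [DivisionRing K]
    [AddCommGroup V] [Module K V] [FiniteDimensional K V] {U W : Submodule K V}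
    (h : finrank K V < finrank K U + finrank K W) : ∃ x ∈ U ⊓ W, x ≠ 0 :=
  exists_mem_ne_zero_of_ne_bot fun hbot ↦
    h.not_ge (finrank_add_finrank_le_of_disjoint (disjoint_iff.mpr hbot))

theorem Fintype.card_subtype_comp_eq_of_map_univ_val_eq {ι α : Type*} [Fintype ι] {f g : ι → α}
    (h : Finset.univ.val.map f = Finset.univ.val.map g) (p : α → Prop) [DecidablePred p] :
    Fintype.card {i // p (f i)} = Fintype.card {i // p (g i)} := by
  simpa only [Multiset.countP_map, Fintype.card_subtype, Finset.card_def, Finset.filter_val] using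
    congrArg (Multiset.countP p) h

namespace Fin

variable {n : ℕ} {α : Type*} [Preorder α] [DecidableLE α] {f : Fin n → α}

theorem sub_le_card_of_monotone (hf : Monotone f) (i : Fin n) :
    n - i ≤ Fintype.card {j // f i ≤ f j} := by
  rw [← card_Ici, Fintype.card_subtype]
  exact Finset.card_le_card fun j hj ↦ by simpa using hf (Finset.mem_Ici.mp hj)

theorem succ_le_card_of_monotone (hf : Monotone f) (i : Fin n) :
    i + 1 ≤ Fintype.card {j // f j ≤ f i} := by
  rw [← card_Iic, Fintype.card_subtype]
  exact Finset.card_le_card fun j hj ↦ by simpa using hf (Finset.mem_Iic.mp hj)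

end Fin

namespace OrthonormalBasis

open RCLike Set

variable {𝕜 E ι : Type*} [RCLike 𝕜] [NormedAddCommGroup E] [InnerProductSpace 𝕜 E] [Fintype ι]
  (b : OrthonormalBasis ι 𝕜 E) {f : ι → ℝ}

local notation "⟪" x ", " y "⟫" => inner 𝕜 x y

theorem inner_eq_zero_of_mem_span_subtype {p : ι → Prop} {x : E}
    (hx : x ∈ span 𝕜 (range fun j : {j // p j} ↦ b j)) {j : ι} (hj : ¬ p j) :
    ⟪b j, x⟫ = 0 := by
  refine mem_orthogonal_singleton_iff_inner_right.mp (span_le.mpr ?_ hx)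
  rintro _ ⟨k, rfl⟩
  exact mem_orthogonal_singleton_iff_inner_right.mpr (b.orthonormal.2 fun h ↦ hj (h ▸ k.2))

theorem finrank_span_subtype (p : ι → Prop) [Fintype {j // p j}] :
    finrank 𝕜 (span 𝕜 (range fun j : {j // p j} ↦ b j)) = Fintype.card {j // p j} :=
  finrank_span_eq_card (b.orthonormal.linearIndependent.comp _ Subtype.val_injective)

section Rayleigh

variable {T : E →ₗ[𝕜] E}

theorem re_inner_apply_self_eq_sum (hT : ∀ j, T (b j) = (f j : 𝕜) • b j) (x : E) :
    re ⟪x, T x⟫ = ∑ j, f j * ‖⟪b j, x⟫‖ ^ 2 := by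
  have hTx : T x = ∑ j, ((f j : 𝕜) * ⟪b j, x⟫) • b j := by
    conv_lhs => rw [← b.sum_repr' x]
    simp [map_sum, hT, smul_smul, mul_comm]
  have hterm : ∀ j, (f j : 𝕜) * ⟪b j, x⟫ * ⟪x, b j⟫ = ((f j * ‖⟪b j, x⟫‖ ^ 2 : ℝ) : 𝕜) := by
    intro j
    rw [← inner_conj_symm x (b j), mul_assoc, RCLike.mul_conj]
    push_cast
    ring
  simp only [hTx, inner_sum, inner_smul_right, hterm, ← RCLike.ofReal_sum, RCLike.ofReal_re]

theorem mul_norm_sq_le_re_inner_apply_self (hT : ∀ j, T (b j) = (f j : 𝕜) • b j)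
    {p : ι → Prop} {c : ℝ} (hp : ∀ j, p j → c ≤ f j)
    {x : E} (hx : x ∈ span 𝕜 (range fun j : {j // p j} ↦ b j)) :
    c * ‖x‖ ^ 2 ≤ re ⟪x, T x⟫ := by
  rw [b.re_inner_apply_self_eq_sum hT, ← b.sum_sq_norm_inner_right, Finset.mul_sum]
  refine Finset.sum_le_sum fun j _ ↦ ?_
  by_cases hj : p j
  · exact mul_le_mul_of_nonneg_right (hp j hj) (sq_nonneg _)
  · simp [b.inner_eq_zero_of_mem_span_subtype hx hj]

theorem re_inner_apply_self_le_mul_norm_sq (hT : ∀ j, T (b j) = (f j : 𝕜) • b j)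
    {p : ι → Prop} {c : ℝ} (hp : ∀ j, p j → f j ≤ c)
    {x : E} (hx : x ∈ span 𝕜 (range fun j : {j // p j} ↦ b j)) :
    re ⟪x, T x⟫ ≤ c * ‖x‖ ^ 2 := by
  have hnegT : ∀ j, (-T) (b j) = ((-f j : ℝ) : 𝕜) • b j := by simp [hT]
  simpa using b.mul_norm_sq_le_re_inner_apply_self hnegT (c := -c)
    (fun j hj ↦ neg_le_neg (hp j hj)) hx

end Rayleigh

theorem le_add_opNorm_sub_of_lt_card_add_card {T S : E →L[𝕜] E} (b' : OrthonormalBasis ι 𝕜 E)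
    {g : ι → ℝ} (hT : ∀ j, T (b j) = (f j : 𝕜) • b j) (hS : ∀ j, S (b' j) = (g j : 𝕜) • b' j)
    {s t : ℝ}
    (hcard : Fintype.card ι < Fintype.card {j // s ≤ f j} + Fintype.card {j // g j ≤ t}) :
    s ≤ t + ‖T - S‖ := by
  have : FiniteDimensional 𝕜 E := b.toBasis.finiteDimensional_of_finite
  obtain ⟨x, ⟨hxT, hxS⟩, hx⟩ := exists_mem_inf_ne_zero_of_finrank_lt_add
    (U := span 𝕜 (range fun j : {j // s ≤ f j} ↦ b j))
    (W := span 𝕜 (range fun j : {j // g j ≤ t} ↦ b' j))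
    (by rwa [b.finrank_span_subtype, b'.finrank_span_subtype, finrank_eq_card_basis b.toBasis])
  have hdiff : re ⟪x, (T - S) x⟫ ≤ ‖T - S‖ * ‖x‖ ^ 2 :=
    calc re ⟪x, (T - S) x⟫ ≤ ‖x‖ * ‖(T - S) x‖ := re_inner_le_norm _ _
      _ ≤ ‖x‖ * (‖T - S‖ * ‖x‖) := by gcongr; exact (T - S).le_opNorm x
      _ = ‖T - S‖ * ‖x‖ ^ 2 := by ring
  refine le_of_mul_le_mul_right ?_ (by positivity : 0 < ‖x‖ ^ 2)
  calc s * ‖x‖ ^ 2 ≤ re ⟪x, T x⟫ :=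
        b.mul_norm_sq_le_re_inner_apply_self (T := T) hT (fun _ h ↦ h) hxT
    _ = re ⟪x, S x⟫ + re ⟪x, (T - S) x⟫ := by simp [inner_sub_right]
    _ ≤ t * ‖x‖ ^ 2 + ‖T - S‖ * ‖x‖ ^ 2 :=
        add_le_add (b'.re_inner_apply_self_le_mul_norm_sq (T := S) hS (fun _ h ↦ h) hxS) hdiff
    _ = (t + ‖T - S‖) * ‖x‖ ^ 2 := by ring

end OrthonormalBasis

namespace Matrix.IsHermitian

open Polynomial

section Spectrum

variable {𝕜 n : Type*} [RCLike 𝕜] [Fintype n] [DecidableEq n] {A : Matrix n n 𝕜}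
  (hA : A.IsHermitian)

theorem toEuclideanCLM_eigenvectorBasis (j : n) :
    toEuclideanCLM (n := n) (𝕜 := 𝕜) A (hA.eigenvectorBasis j) =
      (hA.eigenvalues j : 𝕜) • hA.eigenvectorBasis j := by
  apply WithLp.ofLp_injective
  rw [ofLp_toEuclideanCLM, hA.mulVec_eigenvectorBasis, WithLp.ofLp_smul,
    RCLike.real_smul_eq_coe_smul (K := 𝕜)]

theorem map_eigenvalues_eq_of_charpoly_eq_prod {μ : n → ℝ}
    (hμ : A.charpoly = ∏ i, (X - C (μ i : 𝕜))) :
    Finset.univ.val.map hA.eigenvalues = Finset.univ.val.map μ := by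
  have hroots := hA.roots_charpoly_eq_eigenvalues
  rw [hμ, roots_prod _ _ (Finset.prod_ne_zero_iff.mpr fun i _ ↦ X_sub_C_ne_zero _)] at hroots
  simp only [roots_X_sub_C, Multiset.bind_singleton] at hroots
  apply Multiset.map_injective (RCLike.ofReal_injective (K := 𝕜))
  simpa only [Multiset.map_map, Function.comp_def] using hroots.symm

end Spectrum

theorem sub_le_norm_toEuclideanCLM_sub {𝕜 : Type*} [RCLike 𝕜] {n : ℕ}
    {A B : Matrix (Fin n) (Fin n) 𝕜} (hA : A.IsHermitian) (hB : B.IsHermitian)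
    {μ ν : Fin n → ℝ} (hμmono : Monotone μ) (hνmono : Monotone ν)
    (hμ : A.charpoly = ∏ i, (X - C (μ i : 𝕜))) (hν : B.charpoly = ∏ i, (X - C (ν i : 𝕜)))
    (i : Fin n) :
    μ i - ν i ≤ ‖toEuclideanCLM (n := Fin n) (𝕜 := 𝕜) (A - B)‖ := by
  rw [sub_le_iff_le_add', map_sub]
  refine hA.eigenvectorBasis.le_add_opNorm_sub_of_lt_card_add_card hB.eigenvectorBasis
    hA.toEuclideanCLM_eigenvectorBasis hB.toEuclideanCLM_eigenvectorBasis ?_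
  have hcardA : n - i ≤ Fintype.card {j // μ i ≤ hA.eigenvalues j} :=
    (Fin.sub_le_card_of_monotone hμmono i).trans_eq <|
      Fintype.card_subtype_comp_eq_of_map_univ_val_eq
        (hA.map_eigenvalues_eq_of_charpoly_eq_prod hμ).symm (μ i ≤ ·)
  have hcardB : i + 1 ≤ Fintype.card {j // hB.eigenvalues j ≤ ν i} :=
    (Fin.succ_le_card_of_monotone hνmono i).trans_eq <|
      Fintype.card_subtype_comp_eq_of_map_univ_val_eq
        (hB.map_eigenvalues_eq_of_charpoly_eq_prod hν).symm (· ≤ ν i)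
  rw [Fintype.card_fin]
  omega

end Matrix.IsHermitian

theorem weyl_eigenvalue_perturbation_general
    (n : ℕ)
    (A B : Matrix (Fin n) (Fin n) ℂ)
    (hA : A.IsHermitian) (hB : B.IsHermitian)
    (μ ν : Fin n → ℝ)
    (hμmono : Monotone μ) (hνmono : Monotone ν)
    (hμ : A.charpoly = ∏ i, (Polynomial.X - Polynomial.C ((μ i : ℝ) : ℂ)))
    (hν : B.charpoly = ∏ i, (Polynomial.X - Polynomial.C ((ν i : ℝ) : ℂ))) :
    ∀ i : Fin n, |μ i - ν i| ≤ ‖Matrix.toEuclideanCLM (𝕜 := ℂ) (A - B)‖ := fun i ↦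
  abs_sub_le_iff.mpr ⟨hA.sub_le_norm_toEuclideanCLM_sub hB hμmono hνmono hμ hν i, by
    simpa only [map_sub, norm_sub_rev] using
      hB.sub_le_norm_toEuclideanCLM_sub hA hνmono hμmono hν hμ i⟩

/-- **Weyl's eigenvalue perturbation inequality.**
Let `A`, `B` be Hermitian `n×n` complex matrices and let `μ`, `ν` be their respective
eigenvalues listed in increasing order with multiplicity (so that the characteristic
polynomials factor as `∏ i (X − μ i)` and `∏ i (X − ν i)`).  Then each sorted eigenvalue
moves by at most the operator norm of `A − B` (the norm induced by the Euclidean norm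
on `ℂⁿ`); in particular, each sorted eigenvalue is a continuous function of the
Hermitian matrix. -/
theorem weyl_eigenvalue_perturbation
    (n : ℕ) (hn : 1 ≤ n)
    (A B : Matrix (Fin n) (Fin n) ℂ)
    (hA : A.IsHermitian) (hB : B.IsHermitian)
    (μ ν : Fin n → ℝ)
    (hμmono : Monotone μ) (hνmono : Monotone ν)
    (hμ : A.charpoly = ∏ i, (Polynomial.X - Polynomial.C ((μ i : ℝ) : ℂ)))
    (hν : B.charpoly = ∏ i, (Polynomial.X - Polynomial.C ((ν i : ℝ) : ℂ))) :
    ∀ i : Fin n, |μ i - ν i| ≤ ‖Matrix.toEuclideanCLM (𝕜 := ℂ) (A - B)‖ :=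
  weyl_eigenvalue_perturbation_general n A B hA hB μ ν hμmono hνmono hμ hν
end
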